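/- Let Γ be a connected, locally finite graph such that Aut(Γ)\Γ is finite, and let k ∈ ℕ. Then the canonical action of Aut(Γ) on the set of k-cuts of Γ has only finitely many orbits. In particular, if Γ is moreover accessible, then Aut(Γ) acts with finitely many orbits on C_opt and on the structure tree T(C_opt). -/

import Mathlib

open Pointwise

universe u

namespace CFGroups

variable {V : Type u}

/-- The edge boundary of `C`: adjacent ordered pairs `(u,v)` with `u ∈ C`, `v ∉ C`.
These are in canonical bijection with the undirected edges of `δC`. -/
def edgeBoundary (G : SimpleGraph V) (C : Set V) : Set (V × V) :=
  {p : V × V | G.Adj p.1 p.2 ∧ p.1 ∈ C ∧ p.2 ∉ C}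

/-- The vertex boundary `βC`: endpoints of edges of `δC`. -/
def vertexBoundary (G : SimpleGraph V) (C : Set V) : Set V :=
  {u : V | ∃ v : V, G.Adj u v ∧ ((u ∈ C ∧ v ∉ C) ∨ (v ∈ C ∧ u ∉ C))}

/-- A cut: `C` and its complement are nonempty and connected, and `δC` is finite. -/
def IsCut (G : SimpleGraph V) (C : Set V) : Prop :=
  C.Nonempty ∧ Cᶜ.Nonempty ∧ (G.induce C).Connected ∧ (G.induce Cᶜ).Connected ∧
    (edgeBoundary G C).Finite

/-- The weight `|δC|` of a cut. -/
noncomputable def weight (G : SimpleGraph V) (C : Set V) : ℕ :=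
  (edgeBoundary G C).ncard

/-- A `k`-cut: a cut of weight at most `k`. -/
def IsCutLe (G : SimpleGraph V) (k : ℕ) (C : Set V) : Prop :=
  IsCut G C ∧ weight G C ≤ k

/-- Two cuts are nested. -/
def Nested (C D : Set V) : Prop :=
  C ⊆ D ∨ C ⊆ Dᶜ ∨ Cᶜ ⊆ D ∨ Cᶜ ⊆ Dᶜ

/-- A bi-infinite simple path, as an injective `ℤ`-indexed sequence of successively
adjacent vertices. -/
def IsBiInfinitePath (G : SimpleGraph V) (α : ℤ → V) : Prop :=
  Function.Injective α ∧ ∀ i : ℤ, G.Adj (α i) (α (i + 1))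

/-- A one-sided infinite simple path. -/
def IsRayPath (G : SimpleGraph V) (γ : ℕ → V) : Prop :=
  Function.Injective γ ∧ ∀ i : ℕ, G.Adj (γ i) (γ (i + 1))

/-- `C(α)`: the cuts splitting the bi-infinite simple path `α` into two infinite pieces. -/
def cutsSplitting (G : SimpleGraph V) (α : ℤ → V) : Set (Set V) :=
  {C : Set V | IsCut G C ∧ (Set.range α ∩ C).Infinite ∧ (Set.range α ∩ Cᶜ).Infinite}

/-- `C_min(α)`: the cuts of minimal weight in `C(α)`. -/
def cutsMin (G : SimpleGraph V) (α : ℤ → V) : Set (Set V) :=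
  {C ∈ cutsSplitting G α | ∀ D ∈ cutsSplitting G α, weight G C ≤ weight G D}

/-- `Γ` is accessible with constant `k`: every bi-infinite simple path with `C(α) ≠ ∅`
admits a `k`-cut in `C(α)`. -/
def AccessibleWith (G : SimpleGraph V) (k : ℕ) : Prop :=
  ∀ α : ℤ → V, IsBiInfinitePath G α → (cutsSplitting G α).Nonempty →
    ∃ C ∈ cutsSplitting G α, weight G C ≤ k

/-- An accessible graph. -/
def Accessible (G : SimpleGraph V) : Prop := ∃ k : ℕ, AccessibleWith G k

/-- `m(C)`: the number of `k`-cuts not nested with `C`. -/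
noncomputable def mdeg (G : SimpleGraph V) (k : ℕ) (C : Set V) : ℕ :=
  Set.ncard {D : Set V | IsCutLe G k D ∧ ¬ Nested C D}

/-- `C_opt(α)`: the cuts of `C_min(α)` minimizing `m`. -/
def cutsOpt (G : SimpleGraph V) (k : ℕ) (α : ℤ → V) : Set (Set V) :=
  {C ∈ cutsMin G α | ∀ D ∈ cutsMin G α, mdeg G k C ≤ mdeg G k D}

/-- `C_opt`: the optimally nested cuts. -/
def COpt (G : SimpleGraph V) (k : ℕ) : Set (Set V) :=
  {C : Set V | ∃ α : ℤ → V, IsBiInfinitePath G α ∧ C ∈ cutsOpt G k α}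

/-- The relation `C ∼ D` on optimal cuts. -/
def SimRel (G : SimpleGraph V) (k : ℕ) (C D : Set V) : Prop :=
  C = D ∨ (Cᶜ ⊂ D ∧ ∀ E ∈ COpt G k, Cᶜ ⊂ E → E ⊆ D → E = D)

/-- The equivalence class `[C]` of an optimal cut `C` under `∼`. -/
def cls (G : SimpleGraph V) (k : ℕ) (C : Set V) : Set (Set V) :=
  {D ∈ COpt G k | SimRel G k C D}

/-- The structure tree `T(C_opt)`: vertices are the classes `[C]`, `C ∈ C_opt`, and for each
`C ∈ C_opt` there is an edge joining `[C]` and `[C*]`. -/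
def structureTree (G : SimpleGraph V) (k : ℕ) :
    SimpleGraph {S : Set (Set V) // ∃ C ∈ COpt G k, S = cls G k C} where
  Adj X Y := X ≠ Y ∧ ∃ C ∈ COpt G k,
    (X.1 = cls G k C ∧ Y.1 = cls G k Cᶜ) ∨ (Y.1 = cls G k C ∧ X.1 = cls G k Cᶜ)
  symm := ⟨by
    rintro X Y ⟨hne, C, hC, h⟩
    exact ⟨hne.symm, C, hC, h.symm⟩⟩
  loopless := ⟨fun X h => h.1 rfl⟩

/-- A locally finite graph. -/
def LocallyFiniteGraph (G : SimpleGraph V) : Prop :=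
  ∀ v : V, (G.neighborSet v).Finite

/-- The `r`-th neighbourhood `N^r S` of a set of vertices. -/
def nbhd (G : SimpleGraph V) (r : ℕ) (S : Set V) : Set V :=
  {v : V | ∃ u ∈ S, G.dist v u ≤ r}

/-- The block `B[C] = ⋂_{D ∼ C} N^κ D` assigned to the vertex `[C]` of the structure tree. -/
def block (G : SimpleGraph V) (k κ : ℕ) (C : Set V) : Set V :=
  ⋂ D ∈ cls G k C, nbhd G κ D

/-- `Aut(Γ)\Γ` is finite: the automorphism group of `Γ` acts with finitely many
vertex orbits and finitely many edge orbits. -/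
def AutFinOrbits (G : SimpleGraph V) : Prop :=
  (Set.range fun v : V => Set.range fun φ : G ≃g G => φ v).Finite ∧
  (Set.range fun e : G.edgeSet => Set.range fun φ : G ≃g G => Sym2.map ⇑φ e.1).Finite

/-- A group `H` (equipped with an action on the vertices) acts on the graph `G`
by graph automorphisms. -/
def ActsOn (G : SimpleGraph V) (H : Type u) [Group H] [MulAction H V] : Prop :=
  ∀ (g : H) (u v : V), G.Adj u v ↔ G.Adj (g • u) (g • v)

/-- `G\Γ` is finite: finitely many vertex orbits and finitely many edge orbits. -/
def ActFinOrbits (G : SimpleGraph V) (H : Type u) [Group H] [MulAction H V] : Prop :=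
  (Set.range fun v : V => Set.range fun g : H => g • v).Finite ∧
  (Set.range fun e : G.edgeSet => Set.range fun g : H => Sym2.map (fun v => g • v) e.1).Finite

/-- The graph has more than one end: some finite vertex set can be removed so that at least
two infinite connected components remain. -/
def MoreThanOneEnd (G : SimpleGraph V) : Prop :=
  ∃ S : Set V, S.Finite ∧ ∃ K₁ K₂ : (G.induce Sᶜ).ConnectedComponent,
    K₁ ≠ K₂ ∧ K₁.supp.Infinite ∧ K₂.supp.Infinite

/-- The Cayley graph of a group w.r.t. a generating set `S` (edges labelled by `S ∪ S⁻¹`). -/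
def cayleyGraph (K : Type u) [Group K] (S : Set K) : SimpleGraph K where
  Adj g h := g ≠ h ∧ (g⁻¹ * h ∈ S ∨ h⁻¹ * g ∈ S)
  symm := ⟨by rintro g h ⟨hne, hs⟩; exact ⟨hne.symm, hs.symm⟩⟩
  loopless := ⟨fun g h => h.1 rfl⟩

/-- A finitely generated group all of whose Cayley graphs have at most one end. -/
def FGOneEnded (K : Type u) [Group K] : Prop :=
  Group.FG K ∧ ∀ S : Set K, S.Finite → Subgroup.closure S = ⊤ →
    ¬ MoreThanOneEnd (cayleyGraph K S)

/-- An accessible group: it acts on a tree with finitely many orbits, finite edge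
stabilizers, and all vertex stabilizers finitely generated with at most one end. -/
def GroupAccessible (K : Type u) [Group K] : Prop :=
  ∃ (T : Type u) (tr : SimpleGraph T) (φ : K →* Equiv.Perm T),
    tr.IsTree ∧
    (∀ (g : K) (u v : T), tr.Adj u v ↔ tr.Adj (φ g u) (φ g v)) ∧
    (Set.range fun t : T => Set.range fun g : K => φ g t).Finite ∧
    (Set.range fun e : tr.edgeSet => Set.range fun g : K => Sym2.map ⇑(φ g) e.1).Finite ∧
    (∀ e ∈ tr.edgeSet, {g : K | Sym2.map ⇑(φ g) e = e}.Finite) ∧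
    (∀ t : T, ∃ L : Subgroup K, (L : Set K) = {g : K | φ g t = t} ∧ FGOneEnded ↥L)

/-- A tree decomposition of `G`. -/
def IsTreeDecomp (G : SimpleGraph V) {T : Type u} (tr : SimpleGraph T) (X : T → Set V) : Prop :=
  tr.IsTree ∧ (∀ v : V, ∃ t : T, v ∈ X t) ∧
  (∀ u v : V, G.Adj u v → ∃ t : T, u ∈ X t ∧ v ∈ X t) ∧
  (∀ v : V, (tr.induce {t : T | v ∈ X t}).Connected)

/-- `G` has treewidth at most `w`. -/
def TreewidthAtMost (G : SimpleGraph V) (w : ℕ) : Prop :=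
  ∃ (T : Type u) (tr : SimpleGraph T) (X : T → Set V),
    IsTreeDecomp G tr X ∧ ∀ t : T, (X t).Finite ∧ (X t).ncard ≤ w + 1

/-- `G` has finite treewidth. -/
def FiniteTreewidth (G : SimpleGraph V) : Prop := ∃ w : ℕ, TreewidthAtMost G w

/-- Uniformly bounded vertex degrees. -/
def UnifBoundedDegree (G : SimpleGraph V) : Prop :=
  ∃ d : ℕ, ∀ v : V, (G.neighborSet v).Finite ∧ (G.neighborSet v).ncard ≤ d

/-- A class of groups (in universe `u`), as a property of groups. -/
def VirtuallyIn (𝒢 : (K : Type u) → [inst : Group K] → Prop) (K : Type u) [Group K] : Prop :=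
  ∃ L : Subgroup K, L.FiniteIndex ∧ 𝒢 ↥L

/-- `K` has a quasi-isometric section: for some monoid presentation `π : Σ* → K` with
finite alphabet there is a section `σ` of `π` with `σ(1) = ε` which is quasi-isometric
w.r.t. the tree metric on `Σ*`; `d(u,v) ≤ k` is expressed via a common prefix
decomposition `u = p u'`, `v = p v'` with `|u'| + |v'| ≤ k`. -/
def HasQIS (K : Type u) [Group K] : Prop :=
  ∃ (A : Type u) (_ : Finite A) (π : List A → K),
    (∀ u v : List A, π (u ++ v) = π u * π v) ∧ π [] = 1 ∧ Function.Surjective π ∧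
    ∃ (σ : K → List A) (k : ℕ), 1 ≤ k ∧ σ 1 = [] ∧ (∀ g : K, π (σ g) = g) ∧
      ∀ (g : K) (a : A), ∃ p u' v' : List A,
        σ g = p ++ u' ∧ σ (g * π [a]) = p ++ v' ∧ u'.length + v'.length ≤ k

/-- A context-free group: the word problem w.r.t. some surjective monoid presentation
over a finite alphabet is a context-free language. -/
def IsContextFreeGroup (K : Type u) [Group K] : Prop :=
  ∃ (A : Type u) (_ : Finite A) (π : List A → K),
    (∀ u v : List A, π (u ++ v) = π u * π v) ∧ π [] = 1 ∧ Function.Surjective π ∧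
    Language.IsContextFree ({w : List A | π w = 1} : Language A)

end CFGroups


/-!
Only finitely many `k`-cuts `C` separate the endpoints of a fixed edge `xy` (`x ∈ C`, `y ∉ C`):
otherwise the ultrafilter limit `A` of infinitely many of them has at most `k` boundary edges, so
`δA ⊆ δC` for ultrafilter-many `C`; as `C` and `C*` are connected and `(x, y) ∈ δA`, this forces
`C = A` for all of them. Every `k`-cut has a boundary edge, and an automorphism moves that edge to
one of finitely many representatives of the edge orbits, so there are finitely many orbits of
`k`-cuts. Optimal cuts are `k`-cuts, and `[φ C] = φ [C]`, which gives the remaining two claims.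
-/

section OrbitLemmas

variable {H α β : Type*} [Group H] [MulAction H α]

lemma smul_iff_of_forall_imp {P : α → Prop} (h : ∀ (g : H) (a : α), P a → P (g • a))
    (g : H) (a : α) : P (g • a) ↔ P a :=
  ⟨fun hg => by simpa using h g⁻¹ _ hg, h g a⟩

lemma smul_eq_smul_of_smul_mem_iff [MulAction H β] {S : α → Set β} {g : H}
    (hS : ∀ a b, g • b ∈ S (g • a) ↔ b ∈ S a) (a : α) : S (g • a) = g • S a := by
  ext b
  rw [Set.mem_smul_set_iff_inv_smul_mem, ← hS a (g⁻¹ • b), smul_inv_smul]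

lemma sep_forall_le_smul_set [LE β] {f : α → β} {g : H} (hf : ∀ a, f (g • a) = f a) (S : Set α) :
    {a ∈ g • S | ∀ b ∈ g • S, f a ≤ f b} = g • {a ∈ S | ∀ b ∈ S, f a ≤ f b} :=
  smul_eq_smul_of_smul_mem_iff (S := fun S : Set α => {a ∈ S | ∀ b ∈ S, f a ≤ f b})
    (fun S a => by simp [← Set.image_smul, hf]) S

lemma MulAction.orbit_eq_image_orbit [MulAction H β] {f : α → β}
    (hf : ∀ (g : H) a, f (g • a) = g • f a) (a : α) :
    MulAction.orbit H (f a) = f '' MulAction.orbit H a := by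
  simp only [MulAction.orbit, ← Set.range_comp, Function.comp_def, hf]

lemma Set.exists_finite_subset_forall_exists_eq {f : α → β} {s : Set α}
    (hs : (f '' s).Finite) : ∃ t ⊆ s, t.Finite ∧ ∀ a ∈ s, ∃ b ∈ t, f b = f a := by
  obtain ⟨t, hts, hbij⟩ := Set.exists_subset_bijOn s f
  refine ⟨t, hts, Set.Finite.of_finite_image (hbij.image_eq ▸ hs) hbij.injOn, fun a ha => ?_⟩
  exact hbij.surjOn (Set.mem_image_of_mem f ha)

end OrbitLemmas

namespace CFGroups

variable {V : Type u} {G : SimpleGraph V}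

lemma edgeBoundary_compl (C : Set V) :
    edgeBoundary G Cᶜ = Prod.swap ⁻¹' edgeBoundary G C := by
  ext ⟨u, v⟩
  simp [edgeBoundary, G.adj_comm, and_comm]

lemma subset_of_edgeBoundary_subset {A C : Set V} (hC : (G.induce C).Preconnected) {x : V}
    (hxA : x ∈ A) (hxC : x ∈ C) (h : edgeBoundary G A ⊆ edgeBoundary G C) : C ⊆ A := by
  intro v hvC
  by_contra hvA
  obtain ⟨p⟩ := hC ⟨x, hxC⟩ ⟨v, hvC⟩
  obtain ⟨d, -, hdA, hdA'⟩ := p.exists_boundary_dart (Subtype.val ⁻¹' A) hxA hvA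
  exact (h (show (d.fst.1, d.snd.1) ∈ edgeBoundary G A from ⟨d.adj, hdA, hdA'⟩)).2.2 d.snd.2

lemma eq_of_edgeBoundary_subset {A C : Set V} (hC : (G.induce C).Preconnected)
    (hC' : (G.induce Cᶜ).Preconnected) {x y : V} (hxy : (x, y) ∈ edgeBoundary G A)
    (h : edgeBoundary G A ⊆ edgeBoundary G C) : C = A := by
  have hxyC := h hxy
  refine (subset_of_edgeBoundary_subset hC hxy.2.1 hxyC.2.1 h).antisymm ?_
  have hcompl : edgeBoundary G Aᶜ ⊆ edgeBoundary G Cᶜ := by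
    rw [edgeBoundary_compl, edgeBoundary_compl]
    exact Set.preimage_mono h
  exact Set.compl_subset_compl.mp (subset_of_edgeBoundary_subset hC' hxy.2.2 hxyC.2.2 hcompl)

lemma eventually_edgeBoundary_limit_subset {ι : Type*} (U : Ultrafilter ι) (C : ι → Set V)
    {k : ℕ} (hC : ∀ i, (edgeBoundary G (C i)).Finite ∧ weight G (C i) ≤ k) :
    ∀ᶠ i in U, edgeBoundary G {v | ∀ᶠ j in U, v ∈ C j} ⊆ edgeBoundary G (C i) := by
  set A := {v | ∀ᶠ j in U, v ∈ C j}
  have hmem : ∀ p ∈ edgeBoundary G A, ∀ᶠ i in U, p ∈ edgeBoundary G (C i) := by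
    rintro ⟨u, v⟩ ⟨huv, hu, hv⟩
    filter_upwards [hu, Ultrafilter.eventually_not.mpr hv] with i hui hvi using ⟨huv, hui, hvi⟩
  have hfin : (edgeBoundary G A).Finite := by
    by_contra hinf
    obtain ⟨T, hTA, hTfin, hTcard⟩ := Set.Infinite.exists_subset_ncard_eq hinf (k + 1)
    obtain ⟨i, hi⟩ := ((Filter.eventually_all_finite hTfin).mpr fun p hp => hmem p (hTA hp)).exists
    have := Set.ncard_le_ncard hi (hC i).1
    have := (hC i).2
    rw [weight] at this
    omega
  exact (Filter.eventually_all_finite hfin).mpr hmem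

theorem finite_setOf_isCutLe_mem_not_mem (k : ℕ) {x y : V} (hxy : G.Adj x y) :
    {C : Set V | IsCutLe G k C ∧ x ∈ C ∧ y ∉ C}.Finite := by
  by_contra hinf
  let f := Set.Infinite.natEmbedding _ hinf
  let C : ℕ → Set V := fun n => (f n).1
  have hC : ∀ n, IsCutLe G k (C n) ∧ x ∈ C n ∧ y ∉ C n := fun n => (f n).2
  let U := Filter.hyperfilter ℕ
  set A := {v | ∀ᶠ n in U, v ∈ C n}
  have hxyA : (x, y) ∈ edgeBoundary G A :=
    ⟨hxy, Filter.Eventually.of_forall fun n => (hC n).2.1,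
      fun hy => hy.exists.elim fun n hn => (hC n).2.2 hn⟩
  have hCA : ∀ᶠ n in U, C n = A := by
    have hbound n : (edgeBoundary G (C n)).Finite ∧ weight G (C n) ≤ k :=
      ⟨(hC n).1.1.2.2.2.2, (hC n).1.2⟩
    filter_upwards [eventually_edgeBoundary_limit_subset U C hbound] with n hn
    obtain ⟨⟨-, -, hconn, hconn', -⟩, -⟩ := (hC n).1
    exact eq_of_edgeBoundary_subset hconn.preconnected hconn'.preconnected hxyA hn
  have hsub : {n | C n = A}.Subsingleton :=
    fun m hm n hn => f.injective (Subtype.ext (hm.trans hn.symm))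
  exact hsub.finite.notMem_hyperfilter hCA

section Equivariance

variable (φ : G ≃g G)

lemma edgeBoundary_smul (C : Set V) : edgeBoundary G (φ • C) = φ • edgeBoundary G C := by
  ext ⟨u, v⟩
  simp [edgeBoundary, Set.mem_smul_set_iff_inv_smul_mem, (φ⁻¹).map_adj_iff]

lemma weight_smul (C : Set V) : weight G (φ • C) = weight G C := by
  rw [weight, weight, edgeBoundary_smul, Set.ncard_smul_set]

lemma connected_induce_smul {C : Set V} (h : (G.induce C).Connected) :
    (G.induce (φ • C)).Connected :=
  h.map (SimpleGraph.induceHom φ.toHom fun _ hv => Set.smul_mem_smul_set hv) <| by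
    rintro ⟨_, v, hv, rfl⟩
    exact ⟨⟨v, hv⟩, rfl⟩

lemma IsCut.smul {C : Set V} (h : IsCut G C) : IsCut G (φ • C) := by
  obtain ⟨hne, hne', hconn, hconn', hfin⟩ := h
  refine ⟨hne.smul_set, ?_, connected_induce_smul φ hconn, ?_, ?_⟩
  · rw [← Set.smul_set_compl]
    exact hne'.smul_set
  · rw [← Set.smul_set_compl]
    exact connected_induce_smul φ hconn'
  · rw [edgeBoundary_smul]
    exact hfin.smul_set

lemma isCut_smul_iff {C : Set V} : IsCut G (φ • C) ↔ IsCut G C :=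
  smul_iff_of_forall_imp (fun φ _ h => h.smul φ) φ C

lemma isCutLe_smul_iff {k : ℕ} {C : Set V} : IsCutLe G k (φ • C) ↔ IsCutLe G k C := by
  rw [IsCutLe, IsCutLe, isCut_smul_iff, weight_smul]

lemma nested_smul_iff {C D : Set V} : Nested (φ • C) (φ • D) ↔ Nested C D := by
  simp only [Nested, ← Set.smul_set_compl, Set.smul_set_subset_smul_set_iff]

lemma mdeg_smul (k : ℕ) (C : Set V) : mdeg G k (φ • C) = mdeg G k C := by
  rw [mdeg, mdeg, ← Set.ncard_smul_set φ {D | IsCutLe G k D ∧ ¬ Nested C D}]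
  congr 1
  exact smul_eq_smul_of_smul_mem_iff (g := φ) (S := fun C => {D | IsCutLe G k D ∧ ¬ Nested C D})
    (fun C D => by simp only [Set.mem_ofPred_eq, isCutLe_smul_iff, nested_smul_iff]) C

lemma IsBiInfinitePath.smul {α : ℤ → V} (h : IsBiInfinitePath G α) :
    IsBiInfinitePath G (φ • α) :=
  ⟨(MulAction.injective φ).comp h.1, fun i => φ.map_adj_iff.mpr (h.2 i)⟩

lemma cutsSplitting_smul (α : ℤ → V) : cutsSplitting G (φ • α) = φ • cutsSplitting G α :=
  smul_eq_smul_of_smul_mem_iff (S := cutsSplitting G) (fun α C => by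
    simp only [cutsSplitting, Set.mem_ofPred_eq, isCut_smul_iff, Pi.smul_def, Set.range_smul,
      ← Set.smul_set_compl, ← Set.smul_set_inter, Set.infinite_smul_set]) α

lemma cutsMin_smul (α : ℤ → V) : cutsMin G (φ • α) = φ • cutsMin G α := by
  rw [cutsMin, cutsMin, cutsSplitting_smul]
  exact sep_forall_le_smul_set (weight_smul φ) _

lemma cutsOpt_smul (k : ℕ) (α : ℤ → V) : cutsOpt G k (φ • α) = φ • cutsOpt G k α := by
  rw [cutsOpt, cutsOpt, cutsMin_smul]
  exact sep_forall_le_smul_set (mdeg_smul φ k) _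

lemma smul_mem_COpt_iff {k : ℕ} {C : Set V} : φ • C ∈ COpt G k ↔ C ∈ COpt G k := by
  refine smul_iff_of_forall_imp (fun φ C ⟨α, hα, hC⟩ => ⟨φ • α, hα.smul φ, ?_⟩) φ C
  rw [cutsOpt_smul]
  exact Set.smul_mem_smul_set hC

lemma simRel_smul_iff {k : ℕ} {C D : Set V} : SimRel G k (φ • C) (φ • D) ↔ SimRel G k C D := by
  rw [SimRel, SimRel, (MulAction.surjective φ).forall]
  simp only [smul_left_cancel_iff, ← Set.smul_set_compl, smul_mem_COpt_iff,
    Set.smul_set_subset_smul_set_iff, ssubset_iff_subset_not_subset]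

lemma cls_smul (k : ℕ) (C : Set V) : cls G k (φ • C) = φ • cls G k C :=
  smul_eq_smul_of_smul_mem_iff (S := cls G k)
    (fun C D => by simp only [cls, Set.mem_ofPred_eq, smul_mem_COpt_iff, simRel_smul_iff]) C

end Equivariance

def undirectedEdgeBoundary (G : SimpleGraph V) (C : Set V) : Set (Sym2 V) :=
  Function.uncurry Sym2.mk '' edgeBoundary G C

lemma undirectedEdgeBoundary_smul (φ : G ≃g G) (C : Set V) :
    undirectedEdgeBoundary G (φ • C) = Sym2.map φ '' undirectedEdgeBoundary G C := by
  rw [undirectedEdgeBoundary, undirectedEdgeBoundary, edgeBoundary_smul, ← Set.image_smul,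
    Set.image_image, Set.image_image]
  rfl

lemma edgeBoundary_nonempty (hconn : G.Connected) {C : Set V} (hC : C.Nonempty)
    (hC' : Cᶜ.Nonempty) : (edgeBoundary G C).Nonempty := by
  obtain ⟨x, hx⟩ := hC
  obtain ⟨y, hy⟩ := hC'
  obtain ⟨p⟩ := hconn x y
  obtain ⟨d, -, hd, hd'⟩ := p.exists_boundary_dart C hx hy
  exact ⟨d.toProd, d.adj, hd, hd'⟩

theorem finite_setOf_isCutLe_mem_undirectedEdgeBoundary (k : ℕ) {e : Sym2 V}
    (he : e ∈ G.edgeSet) :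
    {C : Set V | IsCutLe G k C ∧ e ∈ undirectedEdgeBoundary G C}.Finite := by
  induction e using Sym2.ind with | _ x y => ?_
  refine ((finite_setOf_isCutLe_mem_not_mem k he).union
    (finite_setOf_isCutLe_mem_not_mem k (G.adj_symm he))).subset ?_
  rintro C ⟨hC, ⟨u, v⟩, ⟨-, hu, hv⟩, huv⟩
  rcases Sym2.eq_iff.mp huv with ⟨rfl, rfl⟩ | ⟨rfl, rfl⟩
  exacts [Or.inl ⟨hC, hu, hv⟩, Or.inr ⟨hC, hu, hv⟩]

theorem finite_orbits_isCutLe (hconn : G.Connected)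
    (hedge : (Set.range fun e : G.edgeSet => Set.range fun φ : G ≃g G => Sym2.map ⇑φ e.1).Finite)
    (k : ℕ) :
    (Set.range fun C : {C : Set V // IsCutLe G k C} => MulAction.orbit (G ≃g G) C.1).Finite := by
  rw [← Set.image_eq_range (fun e => Set.range fun φ : G ≃g G => Sym2.map ⇑φ e)] at hedge
  obtain ⟨F, hFE, hFfin, hF⟩ := Set.exists_finite_subset_forall_exists_eq hedge
  have hK : (⋃ e ∈ F, {C : Set V | IsCutLe G k C ∧ e ∈ undirectedEdgeBoundary G C}).Finite :=
    hFfin.biUnion fun e he => finite_setOf_isCutLe_mem_undirectedEdgeBoundary k (hFE he)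
  refine (hK.image (MulAction.orbit (G ≃g G))).subset ?_
  rintro _ ⟨⟨C, hC⟩, rfl⟩
  obtain ⟨p, hp⟩ := edgeBoundary_nonempty hconn hC.1.1 hC.1.2.1
  obtain ⟨e, heF, he⟩ := hF s(p.1, p.2) hp.1
  obtain ⟨ψ, hψ⟩ : e ∈ Set.range fun ψ : G ≃g G => Sym2.map ψ s(p.1, p.2) :=
    he ▸ ⟨1, by simp⟩
  refine ⟨ψ • C, Set.mem_biUnion heF ⟨(isCutLe_smul_iff ψ).2 hC, ?_⟩, MulAction.orbit_smul ψ C⟩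
  rw [undirectedEdgeBoundary_smul, ← hψ]
  exact Set.mem_image_of_mem _ (Set.mem_image_of_mem _ hp)

lemma isCutLe_of_mem_COpt {k : ℕ} (hacc : AccessibleWith G k) {C : Set V} (h : C ∈ COpt G k) :
    IsCutLe G k C := by
  obtain ⟨α, hα, ⟨hsplit, hmin⟩, -⟩ := h
  obtain ⟨D, hD, hDk⟩ := hacc α hα ⟨C, hsplit⟩
  exact ⟨hsplit.1, (hmin D hD).trans hDk⟩

end CFGroups

open CFGroups Pointwise in
theorem aut_finitely_many_orbits_on_cuts_general
    {V : Type u} (G : SimpleGraph V) (hconn : G.Connected)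
    (horb : CFGroups.AutFinOrbits G) (k : ℕ) :
    (Set.range fun C : {C : Set V // CFGroups.IsCutLe G k C} =>
        Set.range fun φ : G ≃g G => ⇑φ '' C.1).Finite ∧
    (CFGroups.AccessibleWith G k →
      ((Set.range fun C : {C : Set V // C ∈ CFGroups.COpt G k} =>
          Set.range fun φ : G ≃g G => ⇑φ '' C.1).Finite ∧
       (Set.range fun C : {C : Set V // C ∈ CFGroups.COpt G k} =>
          Set.range fun φ : G ≃g G => Set.image ⇑φ '' CFGroups.cls G k C.1).Finite)) := by
  -- `φ • C` is `⇑φ '' C` by definition, so the ranges above are sets of `MulAction.orbit`s.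
  have hcuts := finite_orbits_isCutLe hconn horb.2 k
  refine ⟨hcuts, fun hacc => ?_⟩
  have hopt : (Set.range fun C : {C : Set V // C ∈ COpt G k} =>
      MulAction.orbit (G ≃g G) C.1).Finite :=
    hcuts.subset <| Set.range_subset_iff.2 fun C => ⟨⟨C, isCutLe_of_mem_COpt hacc C.2⟩, rfl⟩
  refine ⟨hopt, (hopt.image (Set.image (cls G k))).subset ?_⟩
  rintro _ ⟨C, rfl⟩
  exact ⟨_, ⟨C, rfl⟩, (MulAction.orbit_eq_image_orbit (cls_smul · k) C.1).symm⟩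

open CFGroups Pointwise in
/-- If `Aut(Γ)\Γ` is finite, then for every `k` the automorphism group
acts with finitely many orbits on the set of `k`-cuts; in particular, if `Γ` is moreover
accessible (with constant `k`), it acts with finitely many orbits on `C_opt` and on the
vertices of the structure tree `T(C_opt)`. -/
theorem aut_finitely_many_orbits_on_cuts
    {V : Type u} (G : SimpleGraph V) (hconn : G.Connected)
    (hlf : CFGroups.LocallyFiniteGraph G)
    (horb : CFGroups.AutFinOrbits G) (k : ℕ) :
    (Set.range fun C : {C : Set V // CFGroups.IsCutLe G k C} =>
        Set.range fun φ : G ≃g G => ⇑φ '' C.1).Finite ∧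
    (CFGroups.AccessibleWith G k →
      ((Set.range fun C : {C : Set V // C ∈ CFGroups.COpt G k} =>
          Set.range fun φ : G ≃g G => ⇑φ '' C.1).Finite ∧
       (Set.range fun C : {C : Set V // C ∈ CFGroups.COpt G k} =>
          Set.range fun φ : G ≃g G => Set.image ⇑φ '' CFGroups.cls G k C.1).Finite)) :=
  aut_finitely_many_orbits_on_cuts_general G hconn horb k
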